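/- (Uniqueness: any classical solution of the free problem is given by formula (q0).) Let s₀, s₁ : ℝ → ℝ and let q : ℝ × ℝ → ℝ be C² and satisfy q_xx(x,t) = 2·q_xt(x,t) for all x ≥ 0 and all t ∈ ℝ, together with q(0,t) = s₀(t) and q_x(0,t) = s₁(t) for all t ∈ ℝ. Then for every x ≥ 0 and every t ∈ ℝ, q(x,t) = s₀(t) + (1/2)·∫_t^{t+2x} s₁(τ) dτ. -/

import Mathlib

open Set

/-- Partial derivative in the first variable. -/
noncomputable def partialX (f : ℝ × ℝ → ℝ) : ℝ × ℝ → ℝ :=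
  fun p => deriv (fun x => f (x, p.2)) p.1

/-- Partial derivative in the second variable. -/
noncomputable def partialT (f : ℝ × ℝ → ℝ) : ℝ × ℝ → ℝ :=
  fun p => deriv (fun t => f (p.1, t)) p.2

/-!
Differentiating `q` in `x` turns the equation into the transport equation `u_x = 2 u_t` for
`u = q_x`, so `u` is constant along the characteristics `s ↦ (s, c - 2 s)` and
`q_x(x, t) = s₁(t + 2x)`. Integrating in `x` from the boundary and substituting `τ = t + 2y`
gives the formula.
-/

section PartialDerivatives

variable {f : ℝ × ℝ → ℝ} {f' : ℝ × ℝ →L[ℝ] ℝ}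

theorem HasFDerivAt.hasDerivAt_slice_fst {x t : ℝ} (hf : HasFDerivAt f f' (x, t)) :
    HasDerivAt (fun y => f (y, t)) (f' (1, 0)) x :=
  hf.comp_hasDerivAt x ((hasDerivAt_id x).prodMk (hasDerivAt_const x t))

theorem HasFDerivAt.hasDerivAt_slice_snd {x t : ℝ} (hf : HasFDerivAt f f' (x, t)) :
    HasDerivAt (fun s => f (x, s)) (f' (0, 1)) t :=
  hf.comp_hasDerivAt t ((hasDerivAt_const t x).prodMk (hasDerivAt_id t))

theorem HasFDerivAt.partialX_eq {p : ℝ × ℝ} (hf : HasFDerivAt f f' p) :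
    partialX f p = f' (1, 0) :=
  hf.hasDerivAt_slice_fst.deriv

theorem HasFDerivAt.partialT_eq {p : ℝ × ℝ} (hf : HasFDerivAt f f' p) :
    partialT f p = f' (0, 1) :=
  hf.hasDerivAt_slice_snd.deriv

theorem partialX_eq_fderiv (hf : Differentiable ℝ f) :
    partialX f = fun p => fderiv ℝ f p (1, 0) :=
  funext fun p => (hf p).hasFDerivAt.partialX_eq

theorem ContDiff.partialX {n : WithTop ℕ∞} (hf : ContDiff ℝ (n + 1) f) :
    ContDiff ℝ n (partialX f) := by
  rw [partialX_eq_fderiv (hf.differentiable (by simp))]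
  exact (hf.fderiv_right le_rfl).clm_apply contDiff_const

theorem Differentiable.hasDerivAt_partialX_slice (hf : Differentiable ℝ f) (x t : ℝ) :
    HasDerivAt (fun y => f (y, t)) (partialX f (x, t)) x := by
  have hf' := (hf (x, t)).hasFDerivAt
  simpa only [hf'.partialX_eq] using hf'.hasDerivAt_slice_fst

theorem integral_partialX_eq_sub (hf : ContDiff ℝ 1 f) (a b t : ℝ) :
    ∫ y in a..b, partialX f (y, t) = f (b, t) - f (a, t) := by
  refine intervalIntegral.integral_eq_sub_of_hasDerivAt
    (fun y _ => (hf.differentiable one_ne_zero).hasDerivAt_partialX_slice y t) ?_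
  have hcont : Continuous (partialX f) := (zero_add (1 : WithTop ℕ∞) ▸ hf).partialX.continuous
  exact (hcont.comp (continuous_id.prodMk continuous_const)).intervalIntegrable a b

end PartialDerivatives

theorem Differentiable.eq_along_characteristic {u : ℝ × ℝ → ℝ} (hu : Differentiable ℝ u)
    (a : ℝ) (hpde : ∀ x, 0 ≤ x → ∀ t, partialX u (x, t) = a * partialT u (x, t))
    {y : ℝ} (hy : 0 ≤ y) (c : ℝ) : u (y, c - a * y) = u (0, c) := by
  let φ : ℝ → ℝ := fun s => u (s, c - a * s)
  have hφ : ∀ s,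
      HasDerivAt φ (partialX u (s, c - a * s) - a * partialT u (s, c - a * s)) s := by
    intro s
    have hu' := (hu (s, c - a * s)).hasFDerivAt
    have hline : HasDerivAt (fun s : ℝ => (s, c - a * s)) (1, -a) s := by
      refine (hasDerivAt_id s).prodMk ?_
      simpa using ((hasDerivAt_id s).const_mul a).const_sub c
    have hdir : ((1 : ℝ), -a) = ((1 : ℝ), (0 : ℝ)) + (-a) • ((0 : ℝ), (1 : ℝ)) := by
      simp
    have := hu'.comp_hasDerivAt s hline
    rwa [hdir, map_add, map_smul, smul_eq_mul, neg_mul, ← sub_eq_add_neg, ← hu'.partialX_eq,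
      ← hu'.partialT_eq] at this
  have hconst := constant_of_has_deriv_right_zero (f := φ) (a := 0) (b := y)
    (fun s _ => (hφ s).continuousAt.continuousWithinAt)
    (fun s hs => by simpa [hpde s hs.1] using (hφ s).hasDerivWithinAt) y ⟨hy, le_rfl⟩
  simpa [φ] using hconst

/-- Uniqueness: any classical solution of the free problem is given by formula (q0). -/
theorem uniqueness_free_problem
    (s₀ s₁ : ℝ → ℝ) (q : ℝ × ℝ → ℝ) (hq : ContDiff ℝ 2 q)
    (hpde : ∀ x : ℝ, 0 ≤ x → ∀ t : ℝ,
      partialX (partialX q) (x, t) = 2 * partialT (partialX q) (x, t))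
    (h0 : ∀ t : ℝ, q (0, t) = s₀ t)
    (h1 : ∀ t : ℝ, partialX q (0, t) = s₁ t) :
    ∀ x : ℝ, 0 ≤ x → ∀ t : ℝ,
      q (x, t) = s₀ t + (1/2) * ∫ τ in t..(t + 2 * x), s₁ τ := by
  intro x hx t
  have hu : ContDiff ℝ 1 (partialX q) := hq.partialX
  have hchar : ∀ y ∈ uIcc 0 x, partialX q (y, t) = s₁ (t + 2 * y) := by
    intro y hy
    rw [uIcc_of_le hx] at hy
    rw [← h1, ← (hu.differentiable one_ne_zero).eq_along_characteristic 2 hpde hy.1,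
      add_sub_cancel_right]
  have hint : ∫ y in 0..x, partialX q (y, t) = (1/2) * ∫ τ in t..(t + 2 * x), s₁ τ := by
    rw [intervalIntegral.integral_congr hchar,
      intervalIntegral.integral_comp_add_mul _ two_ne_zero]
    simp
  rw [← hint, integral_partialX_eq_sub (hq.of_le one_le_two), h0]
  ring
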